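/- Let X be an n-dimensional random vector in class ℒₙ(K), and let f : ℝⁿ → ℝ be continuously differentiable and convex. Fix a ∈ ℝ and b > 0, and set p = P(f(X) ≥ a and |∇f(X)| ≤ b); assume p > 0. Then for every t ≥ 0, P(f(X) ≤ a − Kb√(2 log(2/p)) − t) ≤ 2 exp(−t²/(2b²K²)). -/

import Mathlib

open MeasureTheory ProbabilityTheory Real
open scoped NNReal ENNReal

/-- First-order condition for a convex differentiable function:
`f y + ⟪∇f y, x - y⟫ ≤ f x`. -/
lemma convex_firstorder {E : Type*} [NormedAddCommGroup E] [InnerProductSpace ℝ E]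
    [CompleteSpace E] {f : E → ℝ} (hconv : ConvexOn ℝ Set.univ f) {y : E}
    (hd : DifferentiableAt ℝ f y) (x : E) :
    f y + inner ℝ (gradient f y) (x - y) ≤ f x := by
  set v := x - y with hv
  have hlim : Filter.Tendsto
      (fun n : ℕ => ((n : ℝ) + 1) • (f (y + ((n : ℝ) + 1)⁻¹ • v) - f y))
      Filter.atTop (nhds (fderiv ℝ f y v)) := by
    apply hd.hasFDerivAt.lim v
    have h0 : Filter.Tendsto (fun n : ℕ => (n : ℝ) + 1) Filter.atTop Filter.atTop :=
      Filter.tendsto_atTop_add_const_right _ _ tendsto_natCast_atTop_atTop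
    exact h0.congr fun n => by
      rw [Real.norm_eq_abs, abs_of_nonneg (by positivity)]
  have hbound : ∀ n : ℕ, ((n : ℝ) + 1) • (f (y + ((n : ℝ) + 1)⁻¹ • v) - f y) ≤ f x - f y := by
    intro n
    set s : ℝ := ((n : ℝ) + 1)⁻¹ with hs
    have hs0 : 0 < s := by positivity
    have hs1 : s ≤ 1 := by
      rw [hs]
      have h1n : (1:ℝ) ≤ (n : ℝ) + 1 := by
        have := Nat.cast_nonneg (α := ℝ) n
        linarith
      exact inv_le_one_of_one_le₀ h1n
    have hcomb := hconv.2 (Set.mem_univ y) (Set.mem_univ x)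
      (show (0:ℝ) ≤ 1 - s by linarith) hs0.le (by ring)
    have heq : (1 - s) • y + s • x = y + s • v := by
      rw [hv]; module
    rw [heq] at hcomb
    have h1 : f (y + s • v) - f y ≤ s * (f x - f y) := by
      have := hcomb
      simp only [smul_eq_mul] at this
      nlinarith
    have h2 : ((n : ℝ) + 1) • (f (y + s • v) - f y) ≤ ((n : ℝ) + 1) * (s * (f x - f y)) := by
      rw [smul_eq_mul]
      exact mul_le_mul_of_nonneg_left h1 (by positivity)
    have h3 : ((n : ℝ) + 1) * s = 1 := by
      rw [hs]
      field_simp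
    calc ((n : ℝ) + 1) • (f (y + s • v) - f y) ≤ ((n : ℝ) + 1) * (s * (f x - f y)) := h2
      _ = f x - f y := by rw [← mul_assoc, h3, one_mul]
  have hle : fderiv ℝ f y v ≤ f x - f y :=
    le_of_tendsto hlim (Filter.Eventually.of_forall hbound)
  have hgrad : (inner ℝ (gradient f y) v : ℝ) = fderiv ℝ f y v := by
    rw [gradient, InnerProductSpace.toDual_symm_apply]
  linarith [hgrad ▸ hle]

/-- Lower-tail bound for a `C¹` convex function of a random vector in class
`ℒₙ(K)` (coordinates are `K`-Lipschitz pushforwards of i.i.d. standard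
Gaussians). -/
theorem convex_lower_tail_concentration {Ω : Type*} [MeasurableSpace Ω]
    (μ : Measure Ω) [IsProbabilityMeasure μ] (n : ℕ)
    (Y : Ω → Fin n → ℝ) (hYmeas : Measurable Y)
    (hY : Measure.map Y μ = Measure.pi fun _ : Fin n => gaussianReal 0 1)
    (K : ℝ≥0) (hK : 0 < K) (g : Fin n → ℝ → ℝ) (hg : ∀ i, LipschitzWith K (g i))
    (X : Ω → EuclideanSpace ℝ (Fin n)) (hX : ∀ ω i, X ω i = g i (Y ω i))
    -- the distance concentration property of the class `ℒₙ(K)`, which is what is used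
    (hdistconc : ∀ A : Set (EuclideanSpace ℝ (Fin n)), IsClosed A →
      ∀ pA : ℝ, pA = (μ {ω | X ω ∈ A}).toReal → 0 < pA → ∀ t : ℝ, 0 ≤ t →
        μ {ω | (K : ℝ) * Real.sqrt (2 * Real.log (2 / pA)) + t ≤ Metric.infDist (X ω) A} ≤
          ENNReal.ofReal (2 * Real.exp (-t ^ 2 / (2 * (K : ℝ) ^ 2))))
    (f : EuclideanSpace ℝ (Fin n) → ℝ)
    (hf : ContDiff ℝ 1 f) (hconv : ConvexOn ℝ Set.univ f)
    (a : ℝ) (b : ℝ) (hb : 0 < b)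
    (p : ℝ) (hp : p = (μ {ω | a ≤ f (X ω) ∧ ‖gradient f (X ω)‖ ≤ b}).toReal) (hp0 : 0 < p)
    (t : ℝ) (ht : 0 ≤ t) :
    μ {ω | f (X ω) ≤ a - (K : ℝ) * b * Real.sqrt (2 * Real.log (2 / p)) - t} ≤
      ENNReal.ofReal (2 * Real.exp (-t ^ 2 / (2 * b ^ 2 * (K : ℝ) ^ 2))) := by
  set A : Set (EuclideanSpace ℝ (Fin n)) := {y | a ≤ f y ∧ ‖gradient f y‖ ≤ b} with hA
  -- A is closed
  have hgradcont : Continuous (fun y => gradient f y) := by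
    have h1 : Continuous (fun y => fderiv ℝ f y) := hf.continuous_fderiv one_ne_zero
    exact (InnerProductSpace.toDual ℝ (EuclideanSpace ℝ (Fin n))).symm.continuous.comp h1
  have hAclosed : IsClosed A := by
    have h1 : IsClosed {y : EuclideanSpace ℝ (Fin n) | a ≤ f y} :=
      isClosed_le continuous_const hf.continuous
    have h2 : IsClosed {y : EuclideanSpace ℝ (Fin n) | ‖gradient f y‖ ≤ b} :=
      isClosed_le hgradcont.norm continuous_const
    exact h1.inter h2
  -- A is nonempty
  have hAne : A.Nonempty := by
    by_contra hne
    rw [Set.not_nonempty_iff_eq_empty] at hne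
    have : {ω | a ≤ f (X ω) ∧ ‖gradient f (X ω)‖ ≤ b} = (∅ : Set Ω) := by
      ext ω
      simp only [Set.mem_setOf_eq, Set.mem_empty_iff_false, iff_false]
      intro hmem
      have : X ω ∈ A := hmem
      rw [hne] at this
      exact this
    rw [this] at hp
    simp at hp
    linarith
  -- the convexity bound: f x ≥ a - b * infDist x A
  have hkey : ∀ x : EuclideanSpace ℝ (Fin n), a - b * Metric.infDist x A ≤ f x := by
    intro x
    by_contra hcon
    push_neg at hcon
    -- then (a - f x)/b > infDist x A, so ∃ y ∈ A with dist x y < (a - f x)/b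
    have hlt : Metric.infDist x A < (a - f x) / b := by
      rw [lt_div_iff₀ hb]
      nlinarith
    obtain ⟨y, hyA, hdy⟩ := (Metric.infDist_lt_iff hAne).mp hlt
    have hdiff : DifferentiableAt ℝ f y := hf.differentiable one_ne_zero y
    have hfo := convex_firstorder hconv hdiff x
    have hinner : -(b * dist x y) ≤ (inner ℝ (gradient f y) (x - y) : ℝ) := by
      have h1 : |(inner ℝ (gradient f y) (x - y) : ℝ)| ≤ ‖gradient f y‖ * ‖x - y‖ :=
        abs_real_inner_le_norm _ _
      have h2 : ‖gradient f y‖ * ‖x - y‖ ≤ b * ‖x - y‖ :=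
        mul_le_mul_of_nonneg_right hyA.2 (norm_nonneg _)
      have h3 : ‖x - y‖ = dist x y := (dist_eq_norm x y).symm
      calc -(b * dist x y) = -(b * ‖x - y‖) := by rw [h3]
        _ ≤ -|(inner ℝ (gradient f y) (x - y) : ℝ)| := by linarith
        _ ≤ (inner ℝ (gradient f y) (x - y) : ℝ) := neg_abs_le _
    have hdy' : b * dist x y < a - f x := by
      rw [lt_div_iff₀ hb] at hlt
      calc b * dist x y < b * ((a - f x) / b) := by
            apply mul_lt_mul_of_pos_left hdy hb
        _ = a - f x := by field_simp
    have : a ≤ f y := hyA.1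
    linarith
  -- event inclusion
  have hincl : {ω | f (X ω) ≤ a - (K : ℝ) * b * Real.sqrt (2 * Real.log (2 / p)) - t} ⊆
      {ω | (K : ℝ) * Real.sqrt (2 * Real.log (2 / p)) + t / b ≤ Metric.infDist (X ω) A} := by
    intro ω hω
    simp only [Set.mem_setOf_eq] at hω ⊢
    have h1 := hkey (X ω)
    have h2 : b * ((K : ℝ) * Real.sqrt (2 * Real.log (2 / p)) + t / b) ≤
        b * Metric.infDist (X ω) A := by
      have : b * (t / b) = t := by field_simp
      nlinarith
    exact le_of_mul_le_mul_left h2 hb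
  have hpA : p = (μ {ω | X ω ∈ A}).toReal := hp
  have hbound := hdistconc A hAclosed p hpA hp0 (t / b) (div_nonneg ht hb.le)
  have hexp : 2 * Real.exp (-(t / b) ^ 2 / (2 * (K : ℝ) ^ 2)) =
      2 * Real.exp (-t ^ 2 / (2 * b ^ 2 * (K : ℝ) ^ 2)) := by
    have harg : -(t / b) ^ 2 / (2 * (K : ℝ) ^ 2) = -t ^ 2 / (2 * b ^ 2 * (K : ℝ) ^ 2) := by
      rw [div_pow, neg_div', div_div]
      congr 1
      ring
    rw [harg]
  calc μ {ω | f (X ω) ≤ a - (K : ℝ) * b * Real.sqrt (2 * Real.log (2 / p)) - t}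
      ≤ μ {ω | (K : ℝ) * Real.sqrt (2 * Real.log (2 / p)) + t / b ≤
          Metric.infDist (X ω) A} := measure_mono hincl
    _ ≤ ENNReal.ofReal (2 * Real.exp (-(t / b) ^ 2 / (2 * (K : ℝ) ^ 2))) := hbound
    _ = ENNReal.ofReal (2 * Real.exp (-t ^ 2 / (2 * b ^ 2 * (K : ℝ) ^ 2))) := by rw [hexp]
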